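/- arXiv:math/0012067 — 3 statements merged into one kernel-verified Lean document; each statement's English description precedes it below -/
import Mathlib

section
/- Let U, V, W be real vector spaces, let J_U and J_W be complex structures on U and W respectively, and let 0 → U →^ι V →^π W → 0 be a short exact sequence of ℝ-linear maps. Then there exists a compatible complex structure on V, i.e. an ℝ-linear map J : V → V with J ∘ J = −id_V, J ∘ ι = ι ∘ J_U, and π ∘ J = J_W ∘ π. -/
/-- **Existence of compatible complex structures.**
Given a short exact sequence `0 → U → V → W → 0` of real vector spaces and
complex structures `J_U`, `J_W` on `U` and `W`, there exists a complex
structure `J` on `V` compatible with the maps of the sequence. -/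
theorem exists_compatible_complex_structure
    (U V W : Type*) [AddCommGroup U] [Module ℝ U]
    [AddCommGroup V] [Module ℝ V] [AddCommGroup W] [Module ℝ W]
    (ι : U →ₗ[ℝ] V) (π : V →ₗ[ℝ] W)
    (hι : Function.Injective ι) (hπ : Function.Surjective π)
    (hexact : LinearMap.range ι = LinearMap.ker π)
    (J_U : U →ₗ[ℝ] U) (hJU : J_U ∘ₗ J_U = -LinearMap.id)
    (J_W : W →ₗ[ℝ] W) (hJW : J_W ∘ₗ J_W = -LinearMap.id) :
    ∃ J : V →ₗ[ℝ] V,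
      J ∘ₗ J = -LinearMap.id ∧ J ∘ₗ ι = ι ∘ₗ J_U ∧ π ∘ₗ J = J_W ∘ₗ π := by
  obtain ⟨s, hs⟩ := π.exists_rightInverse_of_surjective (LinearMap.range_eq_top.2 hπ)
  have hπs : ∀ w, π (s w) = w := fun w => LinearMap.ext_iff.1 hs w
  have hπι : ∀ u, π (ι u) = 0 := fun u => by
    have : ι u ∈ LinearMap.ker π := hexact ▸ LinearMap.mem_range_self ι u
    simpa using this
  have hJU' : ∀ u, J_U (J_U u) = -u := fun u => by
    simpa using LinearMap.ext_iff.1 hJU u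
  have hJW' : ∀ w, J_W (J_W w) = -w := fun w => by
    simpa using LinearMap.ext_iff.1 hJW w
  set f : (U × W) →ₗ[ℝ] V := ι.coprod s with hfdef
  have hfapp : ∀ p : U × W, f p = ι p.1 + s p.2 := fun p => rfl
  have hfinj : Function.Injective f := by
    refine (LinearMap.ker_eq_bot (M := U × W)).1 (LinearMap.ker_eq_bot'.2 ?_)
    rintro ⟨u, w⟩ h
    have h1 : ι u + s w = 0 := h
    have hw : w = 0 := by
      have := congrArg π h1
      simpa [map_add, hπι, hπs] using this
    have hu : u = 0 := hι (by simpa [hw] using h1)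
    simp [hu, hw, Prod.ext_iff]
  have hfsurj : Function.Surjective f := fun v => by
    have hv : v - s (π v) ∈ LinearMap.range ι := by
      rw [hexact]
      simp [hπs]
    obtain ⟨u, hu⟩ := hv
    exact ⟨(u, π v), by simp [hfapp, hu]⟩
  let e : (U × W) ≃ₗ[ℝ] V := LinearEquiv.ofBijective f ⟨hfinj, hfsurj⟩
  have he : ∀ p : U × W, e.symm (f p) = p := fun p => e.symm_apply_apply p
  have hef : ∀ v, f (e.symm v) = v := fun v => e.apply_symm_apply v
  refine ⟨f ∘ₗ (J_U.prodMap J_W) ∘ₗ (e.symm : V ≃ₗ[ℝ] U × W).toLinearMap, ?_, ?_, ?_⟩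
  · ext v
    simp only [LinearMap.comp_apply, LinearEquiv.coe_coe, LinearMap.neg_apply,
      LinearMap.id_apply]
    have h1 : e.symm (f ((J_U.prodMap J_W) (e.symm v))) = (J_U.prodMap J_W) (e.symm v) :=
      he _
    rw [h1]
    have : (J_U.prodMap J_W) ((J_U.prodMap J_W) (e.symm v)) = -(e.symm v) := by
      ext
      · simp [hJU']
      · simp [hJW']
    rw [this, map_neg, hef]
  · ext u
    simp only [LinearMap.comp_apply, LinearEquiv.coe_coe]
    have hu : e.symm (ι u) = (u, 0) := by
      have : f (u, 0) = ι u := by simp [hfapp]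
      rw [← this, he]
    rw [hu]
    simp [hfapp]
  · ext v
    simp only [LinearMap.comp_apply, LinearEquiv.coe_coe]
    have h1 : π v = (e.symm v).2 := by
      conv_lhs => rw [← hef v]
      simp [hfapp, hπι, hπs]
    rw [h1]
    simp [hfapp, hπι, hπs]
end

section
/- Let U, V, W be real vector spaces, let J_U and J_W be complex structures on U and W respectively, let 0 → U →^ι V →^π W → 0 be a short exact sequence of ℝ-linear maps, and suppose J₀ is a compatible complex structure on V. Then the map φ ↦ J₀ + ι ∘ φ ∘ π is a bijection from the set of ℝ-linear maps φ : W → U satisfying φ ∘ J_W = − J_U ∘ φ onto the set of all compatible complex structures on V. In particular, the set of compatible complex structures is an affine space modelled on the space of conjugate-linear maps from W to U. -/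
/-- **Affine structure on the space of compatible complex structures.**
Given a short exact sequence `0 → U → V → W → 0` of real vector spaces,
complex structures `J_U`, `J_W` on `U` and `W`, and a compatible complex
structure `J₀` on `V`, the map `φ ↦ J₀ + ι ∘ φ ∘ π` is a bijection from the
set of conjugate-linear maps `φ : W → U` (those with `φ ∘ J_W = −J_U ∘ φ`)
onto the set of all compatible complex structures on `V`. -/
theorem bijOn_compatible_complex_structures
    (U V W : Type*) [AddCommGroup U] [Module ℝ U]
    [AddCommGroup V] [Module ℝ V] [AddCommGroup W] [Module ℝ W]
    (ι : U →ₗ[ℝ] V) (π : V →ₗ[ℝ] W)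
    (hι : Function.Injective ι) (hπ : Function.Surjective π)
    (hexact : LinearMap.range ι = LinearMap.ker π)
    (J_U : U →ₗ[ℝ] U) (hJU : J_U ∘ₗ J_U = -LinearMap.id)
    (J_W : W →ₗ[ℝ] W) (hJW : J_W ∘ₗ J_W = -LinearMap.id)
    (J₀ : V →ₗ[ℝ] V)
    (hJ₀ : J₀ ∘ₗ J₀ = -LinearMap.id ∧ J₀ ∘ₗ ι = ι ∘ₗ J_U ∧ π ∘ₗ J₀ = J_W ∘ₗ π) :
    Set.BijOn (fun φ : W →ₗ[ℝ] U => J₀ + ι ∘ₗ φ ∘ₗ π)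
      {φ : W →ₗ[ℝ] U | φ ∘ₗ J_W = -(J_U ∘ₗ φ)}
      {J : V →ₗ[ℝ] V |
        J ∘ₗ J = -LinearMap.id ∧ J ∘ₗ ι = ι ∘ₗ J_U ∧ π ∘ₗ J = J_W ∘ₗ π} := by
  obtain ⟨hJ₀2, hJ₀ι, hπJ₀⟩ := hJ₀
  have hπι : ∀ u, π (ι u) = 0 := fun u =>
    (LinearMap.mem_ker).mp (hexact ▸ LinearMap.mem_range_self ι u)
  have hJ₀ι' : ∀ u, J₀ (ι u) = ι (J_U u) := fun u => DFunLike.congr_fun hJ₀ι u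
  have hπJ₀' : ∀ v, π (J₀ v) = J_W (π v) := fun v => DFunLike.congr_fun hπJ₀ v
  have hJ₀2' : ∀ v, J₀ (J₀ v) = -v := fun v => DFunLike.congr_fun hJ₀2 v
  refine ⟨?_, ?_, ?_⟩
  · -- maps to
    intro φ hφ
    have hφ' : ∀ w, φ (J_W w) = -J_U (φ w) := fun w => DFunLike.congr_fun hφ w
    refine ⟨?_, ?_, ?_⟩
    · ext v
      simp [hJ₀2', hJ₀ι', hπJ₀', hπι, hφ']
    · ext u
      simp [hJ₀ι', hπι]
    · ext v
      simp [hπJ₀', hπι]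
  · -- inj on
    intro φ _ ψ _ h
    have h' : ∀ v, ι (φ (π v)) = ι (ψ (π v)) := by
      intro v
      have := DFunLike.congr_fun h v
      simpa using this
    ext w
    obtain ⟨v, rfl⟩ := hπ w
    exact hι (h' v)
  · -- surj on
    intro J hJ
    obtain ⟨hJ2, hJι, hπJ⟩ := hJ
    obtain ⟨ρ, hρ⟩ := ι.exists_leftInverse_of_injective (LinearMap.ker_eq_bot.mpr hι)
    obtain ⟨σ, hσ⟩ := π.exists_rightInverse_of_surjective (LinearMap.range_eq_top.mpr hπ)
    have hρ' : ∀ u, ρ (ι u) = u := fun u => DFunLike.congr_fun hρ u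
    have hσ' : ∀ w, π (σ w) = w := fun w => DFunLike.congr_fun hσ w
    set D : V →ₗ[ℝ] V := J - J₀ with hD
    have hJι' : ∀ u, J (ι u) = ι (J_U u) := fun u => DFunLike.congr_fun hJι u
    have hπJ' : ∀ v, π (J v) = J_W (π v) := fun v => DFunLike.congr_fun hπJ v
    have hJ2' : ∀ v, J (J v) = -v := fun v => DFunLike.congr_fun hJ2 v
    have hDι : ∀ u, D (ι u) = 0 := by
      intro u; simp [hD, hJι', hJ₀ι']
    have hDker : ∀ v, π v = 0 → D v = 0 := by
      intro v hv
      have : v ∈ LinearMap.range ι := hexact ▸ (LinearMap.mem_ker.mpr hv)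
      obtain ⟨u, rfl⟩ := this
      exact hDι u
    have hDrange : ∀ v, ι (ρ (D v)) = D v := by
      intro v
      have : D v ∈ LinearMap.range ι := by
        rw [hexact, LinearMap.mem_ker]
        simp [hD, hπJ', hπJ₀']
      obtain ⟨u, hu⟩ := this
      rw [← hu, hρ']
    set φ : W →ₗ[ℝ] U := ρ ∘ₗ D ∘ₗ σ with hφdef
    have key : ∀ v, ι (φ (π v)) = D v := by
      intro v
      have h1 : D (σ (π v)) = D v := by
        have h0 : D (σ (π v) - v) = 0 := hDker _ (by simp [hσ'])
        have h2 := sub_eq_zero.mp (by simpa [map_sub] using h0)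
        simpa using h2
      simp only [hφdef, LinearMap.comp_apply]
      rw [h1, hDrange]
    have hJeq : (fun φ : W →ₗ[ℝ] U => J₀ + ι ∘ₗ φ ∘ₗ π) φ = J := by
      ext v
      simp only [LinearMap.add_apply, LinearMap.comp_apply, key]
      simp [hD]
    refine ⟨φ, ?_, hJeq⟩
    -- conjugate linearity
    have hDD : ∀ v, D (D v) = 0 := by
      intro v
      rw [← key v]
      exact hDι _
    have hanti : ∀ v, J₀ (J v) + J (J₀ v) + (v + v) = 0 := by
      intro v
      have h := hDD v
      simp only [hD, LinearMap.sub_apply, map_sub, hJ2', hJ₀2'] at h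
      have e : J₀ (J v) + J (J₀ v) + (v + v)
          = -(-v - J₀ (J v) - (J (J₀ v) - -v)) := by abel
      rw [e, h, neg_zero]
    have keyconj : ∀ v, J_U (φ (π v)) + φ (J_W (π v)) = 0 := by
      intro v
      apply hι
      rw [map_zero, map_add]
      have a1 : ι (J_U (φ (π v))) = J₀ (J v) + v := by
        rw [← hJ₀ι', key v]
        simp [hD, hJ₀2', sub_neg_eq_add]
      have a2 : ι (φ (J_W (π v))) = J (J₀ v) + v := by
        rw [← hπJ₀', key (J₀ v)]
        simp [hD, hJ₀2', sub_neg_eq_add]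
      rw [a1, a2]
      have e : J₀ (J v) + v + (J (J₀ v) + v)
          = J₀ (J v) + J (J₀ v) + (v + v) := by abel
      rw [e, hanti]
    ext w
    obtain ⟨v, rfl⟩ := hπ w
    have := eq_neg_of_add_eq_zero_right (keyconj v)
    simpa using this
end

section
/- Fix r ≥ 1, matrices B, B′ ∈ M_r(ℂ) with B B′ = B′ B, and a vector v ∈ ℂ^r, and suppose the triple (B, B′, v) is stable. Then for every t ∈ ℂ, one has (B B′) v = t v if and only if B B′ = t · I_r. In particular, the ideal associated to (B, B′, v) contains the polynomial z w − t precisely when B B′ = t I_r. -/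
/-- **Characterization of the fibre of the relative Hilbert scheme.**
If `(B, B′, v)` is a stable triple of commuting `r × r` complex matrices, then
for every `t ∈ ℂ` one has `(B B′) v = t v` if and only if `B B′ = t·I_r`. -/
theorem stable_triple_eigen_iff_scalar (r : ℕ) (hr : 1 ≤ r)
    (B B' : Matrix (Fin r) (Fin r) ℂ) (hcomm : B * B' = B' * B)
    (v : Fin r → ℂ)
    (hstable : ∀ S : Submodule ℂ (Fin r → ℂ),
      (∀ x ∈ S, B.mulVec x ∈ S) → (∀ x ∈ S, B'.mulVec x ∈ S) → v ∈ S →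
      S = ⊤) :
    ∀ t : ℂ, (B * B').mulVec v = t • v ↔
      B * B' = t • (1 : Matrix (Fin r) (Fin r) ℂ) := by
  intro t
  constructor
  · intro hv
    set A : Matrix (Fin r) (Fin r) ℂ := B * B' - t • 1 with hA
    have hAB : A * B = B * A := by
      simp only [hA, sub_mul, mul_sub, smul_mul_assoc, mul_smul_comm, one_mul, mul_one]
      congr 1
      calc B * B' * B = B * (B' * B) := by rw [mul_assoc]
        _ = B * (B * B') := by rw [hcomm]
    have hAB' : A * B' = B' * A := by
      simp only [hA, sub_mul, mul_sub, smul_mul_assoc, mul_smul_comm, one_mul, mul_one]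
      congr 1
      calc B * B' * B' = B' * B * B' := by rw [hcomm]
        _ = B' * (B * B') := by rw [mul_assoc]
    set S : Submodule ℂ (Fin r → ℂ) := LinearMap.ker A.mulVecLin with hS
    have hmem : ∀ x, x ∈ S ↔ A.mulVec x = 0 := by
      intro x; simp [hS]
    have key : ∀ M : Matrix (Fin r) (Fin r) ℂ, A * M = M * A →
        ∀ x, A.mulVec x = 0 → A.mulVec (M.mulVec x) = 0 := by
      intro M hM x hx
      calc A.mulVec (M.mulVec x) = (A * M).mulVec x := by rw [Matrix.mulVec_mulVec]
        _ = (M * A).mulVec x := by rw [hM]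
        _ = M.mulVec (A.mulVec x) := by rw [Matrix.mulVec_mulVec]
        _ = 0 := by rw [hx, Matrix.mulVec_zero]
    have hStop : S = ⊤ := by
      apply hstable
      · intro x hx
        rw [hmem] at hx ⊢
        exact key B hAB x hx
      · intro x hx
        rw [hmem] at hx ⊢
        exact key B' hAB' x hx
      · rw [hmem, hA, Matrix.sub_mulVec, hv, Matrix.smul_mulVec,
          Matrix.one_mulVec, sub_self]
    have hAzero : ∀ x, A.mulVec x = 0 := by
      intro x
      have : x ∈ S := hStop ▸ Submodule.mem_top
      exact (hmem x).mp this
    have : A = 0 := by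
      ext i j
      have := congrFun (hAzero (Pi.single j 1)) i
      rwa [Matrix.mulVec_single_one] at this
    have := sub_eq_zero.mp (hA ▸ this)
    exact this
  · intro h
    rw [h, Matrix.smul_mulVec, Matrix.one_mulVec]
end
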